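/- Let G be a C₄-free graph on n vertices whose spectral radius μ satisfies μ² − μ = n − 1. Then every two distinct vertices of G have exactly one common neighbor. -/

import Mathlib

/-!
Let `y ≥ 0` be a Perron eigenvector of the adjacency matrix `A` and `u` a vertex where `y` is
largest. Since `G` has no 4-cycle, two distinct vertices have at most one common neighbour, so
`A² ≤ D + A + Ā` entrywise, where `D` is the degree matrix and `Ā` the adjacency matrix of the
complement. Evaluating `A² y = μ² y` at `u` gives
`μ² y u ≤ (deg u + μ + (n - 1 - deg u)) y u = (μ + n - 1) y u`,
and `μ² - μ = n - 1` forces equality throughout: `u` has exactly one common neighbour with every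
other vertex, and every non-neighbour of `u` has maximal weight as well. Hence two vertices of
non-maximal weight are both adjacent to `u`, which is then their unique common neighbour.
-/

open Matrix Finset

def IsSpecRad {n : ℕ} (A : Matrix (Fin n) (Fin n) ℝ) (μ : ℝ) : Prop :=
  Module.End.HasEigenvalue A.mulVecLin μ ∧
    ∀ ν : ℝ, Module.End.HasEigenvalue A.mulVecLin ν → ν ≤ μ

def Has4Cycle {V : Type*} (G : SimpleGraph V) : Prop :=
  ∃ a b c d : V, G.Adj a b ∧ G.Adj b c ∧ G.Adj c d ∧ G.Adj d a ∧ a ≠ c ∧ b ≠ d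

namespace Matrix

open Module.End

variable {ι : Type*} [Fintype ι] [DecidableEq ι] {A : Matrix ι ι ℝ} {μ : ℝ}

theorem IsHermitian.posSemidef_smul_one_sub (hA : A.IsHermitian)
    (hμ : ∀ ν, HasEigenvalue A.mulVecLin ν → ν ≤ μ) : (μ • 1 - A).PosSemidef := by
  have hB : (μ • 1 - A).IsHermitian := (isHermitian_one.smul (IsSelfAdjoint.all μ)).sub hA
  refine hB.posSemidef_iff_eigenvalues_nonneg.2 fun i => ?_
  have hν := hB.eigenvalues_mem_spectrum_real i
  rw [← spectrum_toLin', ← hasEigenvalue_iff_mem_spectrum, map_sub, map_smul, toLin'_one,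
    hasEigenvalue_sub'_iff, toLin'_apply'] at hν
  simpa using hμ _ hν

omit [DecidableEq ι] in
theorem dotProduct_mulVec_le_abs (hA : ∀ i j, 0 ≤ A i j) (x : ι → ℝ) :
    x ⬝ᵥ (A *ᵥ x) ≤ |x| ⬝ᵥ (A *ᵥ |x|) := by
  simp only [dot_mulVec_eq_sum_sum]
  refine sum_le_sum fun j _ => sum_le_sum fun i _ => ?_
  calc x i * A i j * x j ≤ |x i * A i j * x j| := le_abs_self _
    _ = |x| i * A i j * |x| j := by simp [abs_mul, abs_of_nonneg (hA i j)]

theorem exists_nonneg_eigenvector_of_forall_hasEigenvalue_le (hA : A.IsHermitian)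
    (hA₀ : ∀ i j, 0 ≤ A i j) (hμ : HasEigenvalue A.mulVecLin μ)
    (hmax : ∀ ν, HasEigenvalue A.mulVecLin ν → ν ≤ μ) :
    ∃ y, y ≠ 0 ∧ 0 ≤ y ∧ A *ᵥ y = μ • y := by
  obtain ⟨x, hx⟩ := hμ.exists_hasEigenvector
  have hAx : A *ᵥ x = μ • x := by simpa using hx.apply_eq_smul
  have hB := hA.posSemidef_smul_one_sub hmax
  have hq (z : ι → ℝ) : z ⬝ᵥ ((μ • 1 - A) *ᵥ z) = μ * (z ⬝ᵥ z) - z ⬝ᵥ (A *ᵥ z) := by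
    simp [sub_mulVec, smul_mulVec, dotProduct_sub]
  -- `|x|` is a null vector of the positive semidefinite form, hence lies in its kernel
  have hnull : |x| ⬝ᵥ ((μ • 1 - A) *ᵥ |x|) = 0 := by
    refine le_antisymm ?_ (by simpa using hB.dotProduct_mulVec_nonneg |x|)
    have habs : |x| ⬝ᵥ |x| = x ⬝ᵥ x := by simp [dotProduct, abs_mul_abs_self]
    have hx0 : x ⬝ᵥ ((μ • 1 - A) *ᵥ x) = 0 := by simp [sub_mulVec, smul_mulVec, hAx]
    have hq' := hq |x|
    rw [habs] at hq'
    linarith [hq x, dotProduct_mulVec_le_abs hA₀ x]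
  have hker := (hB.dotProduct_mulVec_zero_iff |x|).1 (by simpa using hnull)
  refine ⟨|x|, by simpa using hx.2, abs_nonneg x, ?_⟩
  rw [sub_mulVec, smul_mulVec, one_mulVec, sub_eq_zero] at hker
  exact hker.symm

end Matrix

namespace SimpleGraph

variable {V : Type*} [Fintype V] [DecidableEq V] {G : SimpleGraph V} [DecidableRel G.Adj]

theorem card_neighborFinset_inter_le_one (hC4 : ¬ Has4Cycle G) {u v : V} (huv : u ≠ v) :
    #(G.neighborFinset u ∩ G.neighborFinset v) ≤ 1 := by
  refine card_le_one.2 fun a ha b hb => by_contra fun hab => hC4 ?_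
  simp only [mem_inter, mem_neighborFinset] at ha hb
  exact ⟨u, a, v, b, ha.1, ha.2.symm, hb.2, hb.1.symm, huv, hab⟩

theorem adjMatrix_mul_self_apply {α : Type*} [NonAssocSemiring α] (u w : V) :
    (G.adjMatrix α * G.adjMatrix α) u w = #(G.neighborFinset u ∩ G.neighborFinset w) := by
  rw [adjMatrix_mul_apply, ← filter_mem_eq_inter]
  simp [adjMatrix_apply, sum_boole, adj_comm]

theorem adjMatrix_mul_self_apply_le (hC4 : ¬ Has4Cycle G) (u w : V) :
    (G.adjMatrix ℝ * G.adjMatrix ℝ) u w ≤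
      G.degMatrix ℝ u w + G.adjMatrix ℝ u w + Gᶜ.adjMatrix ℝ u w := by
  by_cases huw : u = w
  · subst huw
    simp only [adjMatrix_mul_self_apply_self, degMatrix, diagonal_apply_eq, adjMatrix_apply,
      SimpleGraph.irrefl, if_false, add_zero, le_refl]
  · have h := card_neighborFinset_inter_le_one hC4 huw
    rw [adjMatrix_mul_self_apply, degMatrix, diagonal_apply_ne _ huw, zero_add]
    by_cases hadj : G.Adj u w <;> simpa [hadj, huw] using h

variable {μ : ℝ} {y : V → ℝ} {u w : V}

omit [DecidableEq V] in
theorem Adj.pos_of_mulVec_eq_smul (hy : 0 ≤ y) (hAy : G.adjMatrix ℝ *ᵥ y = μ • y)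
    (hadj : G.Adj u w) (hu : 0 < y u) : 0 < y w := by
  refine (hy w).lt_of_ne' fun hw => hu.ne' ?_
  have h := congrFun hAy w
  rw [adjMatrix_mulVec_apply, Pi.smul_apply, hw, Pi.zero_apply, smul_zero] at h
  exact (sum_eq_zero_iff_of_nonneg fun z _ => hy z).1 h u (by simpa using hadj.symm)

theorem card_neighborFinset_inter_mul_eq_and_eq_of_compl_adj (hC4 : ¬ Has4Cycle G)
    (hμ : μ ^ 2 - μ = Fintype.card V - 1) (hy : 0 ≤ y) (hAy : G.adjMatrix ℝ *ᵥ y = μ • y)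
    (hu : ∀ w, y w ≤ y u) :
    (∀ w ≠ u, (#(G.neighborFinset u ∩ G.neighborFinset w) : ℝ) * y w = y w) ∧
      ∀ w, Gᶜ.Adj u w → y w = y u := by
  set A := G.adjMatrix ℝ
  set Ac := Gᶜ.adjMatrix ℝ
  set B := G.degMatrix ℝ + A + Ac
  have hA2 : ∑ w, (A * A) u w * y w = μ ^ 2 * y u := by
    have h : (A * A) *ᵥ y = μ ^ 2 • y := by
      rw [← mulVec_mulVec, hAy, mulVec_smul, hAy, smul_smul, sq]
    simpa [mulVec, dotProduct] using congrFun h u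
  have hB : ∑ w, B u w * y w = G.degree u * y u + μ * y u + ∑ w, Ac u w * y w := by
    have h : (B *ᵥ y) u = G.degree u * y u + μ * y u + (Ac *ᵥ y) u := by
      simp [B, add_mulVec, degMatrix_mulVec_apply, hAy]
    simpa [mulVec, dotProduct] using h
  have hAc : ∑ w, Ac u w * y u = Gᶜ.degree u * y u := by
    rw [← adjMatrix_mulVec_const_apply]
    rfl
  have hdeg : (G.degree u : ℝ) + Gᶜ.degree u = Fintype.card V - 1 := by
    have := G.degree_lt_card_verts u
    rw [degree_compl, Nat.cast_sub (by omega), Nat.cast_sub (by omega)]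
    ring
  have hle₁ : ∀ w ∈ univ, (A * A) u w * y w ≤ B u w * y w := fun w _ =>
    mul_le_mul_of_nonneg_right (adjMatrix_mul_self_apply_le hC4 u w) (hy w)
  have hle₂ : ∀ w ∈ univ, Ac u w * y w ≤ Ac u w * y u := fun w _ =>
    mul_le_mul_of_nonneg_left (hu w) (by simp only [Ac, adjMatrix_apply]; positivity)
  -- `μ² y u ≤ ∑ B y ≤ (deg u + degᶜ u + μ) y u = μ² y u`, so both inequalities are equalities
  have htight : ((G.degree u : ℝ) + Gᶜ.degree u) * y u + μ * y u = μ ^ 2 * y u := by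
    rw [hdeg]
    linear_combination (-y u) * hμ
  have hsum₁ := sum_le_sum hle₁
  have hsum₂ := sum_le_sum hle₂
  have t₁ := (sum_eq_sum_iff_of_le hle₁).1 (by linarith)
  have t₂ := (sum_eq_sum_iff_of_le hle₂).1 (by linarith)
  refine ⟨fun w hw => ?_, fun w hw => ?_⟩
  · have h := t₁ w (mem_univ w)
    rw [adjMatrix_mul_self_apply] at h
    by_cases hadj : G.Adj u w <;> simpa [B, A, Ac, degMatrix, hw.symm, hadj] using h
  · simpa [Ac, hw] using t₂ w (mem_univ w)

theorem card_neighborFinset_inter_eq_one_of_forall_le (hC4 : ¬ Has4Cycle G)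
    (hμ : μ ^ 2 - μ = Fintype.card V - 1) (hy : 0 ≤ y) (hAy : G.adjMatrix ℝ *ᵥ y = μ • y)
    (hu : ∀ w, y w ≤ y u) (hpos : 0 < y u) (hw : w ≠ u) :
    #(G.neighborFinset u ∩ G.neighborFinset w) = 1 := by
  obtain ⟨hcard, hcompl⟩ :=
    card_neighborFinset_inter_mul_eq_and_eq_of_compl_adj hC4 hμ hy hAy hu
  have hyw : 0 < y w := by
    by_cases hadj : G.Adj u w
    · exact hadj.pos_of_mulVec_eq_smul hy hAy hpos
    · exact hcompl w ⟨hw.symm, hadj⟩ ▸ hpos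
  exact_mod_cast (mul_eq_right₀ hyw.ne').1 (hcard w hw)

end SimpleGraph

theorem equality_friendship (n : ℕ) (G : SimpleGraph (Fin n)) [DecidableRel G.Adj] (μ : ℝ)
    (hC4 : ¬ Has4Cycle G)
    (hμ : IsSpecRad (G.adjMatrix ℝ) μ)
    (heq : μ ^ 2 - μ = (n : ℝ) - 1) :
    ∀ u v : Fin n, u ≠ v → (G.neighborFinset u ∩ G.neighborFinset v).card = 1 := by
  intro u v huv
  obtain ⟨y, hy₀, hy, hAy⟩ := exists_nonneg_eigenvector_of_forall_hasEigenvalue_le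
    (G.isHermitian_adjMatrix ℝ) (fun i j => by rw [G.adjMatrix_apply]; positivity) hμ.1 hμ.2
  have hcard : μ ^ 2 - μ = Fintype.card (Fin n) - 1 := by rwa [Fintype.card_fin]
  obtain ⟨m, -, hm⟩ := exists_max_image univ y ⟨u, mem_univ u⟩
  have hmax {x} (hx : y x = y m) (w : Fin n) : y w ≤ y x := hx ▸ hm w (mem_univ w)
  have hmpos : 0 < y m := by
    obtain ⟨i, hi⟩ := Function.ne_iff.1 hy₀
    exact ((hy i).lt_of_ne' hi).trans_le (hmax rfl i)
  by_cases hu : y u = y m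
  · exact SimpleGraph.card_neighborFinset_inter_eq_one_of_forall_le hC4 hcard hy hAy (hmax hu)
      (hu ▸ hmpos) huv.symm
  by_cases hv : y v = y m
  · rw [inter_comm]
    exact SimpleGraph.card_neighborFinset_inter_eq_one_of_forall_le hC4 hcard hy hAy (hmax hv)
      (hv ▸ hmpos) huv
  have hadj {x} (hx : y x ≠ y m) : G.Adj x m := by
    by_contra h
    refine hx ((SimpleGraph.card_neighborFinset_inter_mul_eq_and_eq_of_compl_adj hC4 hcard hy
      hAy (hmax rfl)).2 x ((G.compl_adj m x).2 ⟨?_, fun h' => h h'.symm⟩))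
    rintro rfl
    exact hx rfl
  exact (SimpleGraph.card_neighborFinset_inter_le_one hC4 huv).antisymm
    (card_pos.2 ⟨m, by simp [hadj hu, hadj hv]⟩)
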